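/- arXiv:1304.6994 — 4 statements merged into one kernel-verified Lean document; each statement's English description precedes it below -/
import Mathlib

section
/- Let g be a finite connected graph on n ≥ 1 vertices, with diameter D, and let K = (2n-1)(D+1)+2. Assign to each vertex v a distinct identity id_v ∈ {0,...,n-1}. If a configuration r : V → Z/KZ satisfies d_K(r(u), r(v)) ≤ D for all vertices u, v, then at most one vertex v satisfies r(v) ≡ 2n + 2·D·id_v (mod K). -/
/-!
If `u ≠ v` are both privileged, their clock difference
is `2D·m (mod K)` with `0 < |m| < n`, and `K` is chosen so that `D < 2D·|m| < K - D`
(indeed `K - 2D(n-1) = D + 2n + 1`); hence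
`d_K(r u, r v) > D`, contradicting legitimacy. The case `D = 0` is separate: a connected finite
graph of diameter `0` has a single vertex.
-/

/-- `d_K(c,c') = min((c-c') mod K, (c'-c) mod K)`, with `mod K` taking
values in `{0,...,K-1}`. -/
def dK (K c c' : ℤ) : ℤ := min ((c - c') % K) ((c' - c) % K)

lemma dK_comm (K c c' : ℤ) : dK K c c' = dK K c' c :=
  min_comm _ _

lemma dK_congr {K a a' b b' : ℤ} (ha : a ≡ a' [ZMOD K]) (hb : b ≡ b' [ZMOD K]) :
    dK K a b = dK K a' b' := by
  unfold dK
  rw [(ha.sub hb).eq, (hb.sub ha).eq]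

lemma lt_dK_of_lt_sub_of_sub_lt {K D c c' : ℤ} (hD : 0 ≤ D) (h₁ : D < c - c')
    (h₂ : c - c' < K - D) : D < dK K c c' := by
  have hpos : (c - c') % K = c - c' := Int.emod_eq_of_lt (by omega) (by omega)
  have hneg : (c' - c) % K = K - (c - c') := by
    rw [← Int.add_mul_emod_self_left (c' - c) K 1, show c' - c + K * 1 = K - (c - c') by ring]
    exact Int.emod_eq_of_lt (by omega) (by omega)
  rw [dK, hpos, hneg]
  exact lt_min h₁ (by omega)

lemma lt_dK_privileged {n D a b : ℕ} (hD : 0 < D) (ha : a < n) (hb : b < n) (hab : a ≠ b) :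
    (D : ℤ) < dK ((2 * n - 1) * (D + 1) + 2) (2 * n + 2 * D * a) (2 * n + 2 * D * b) := by
  wlog hlt : b < a generalizing a b
  · rw [dK_comm]
    exact this hb ha hab.symm (by omega)
  have hm : (2 * n + 2 * D * a : ℤ) - (2 * n + 2 * D * b) = 2 * D * ((a : ℤ) - b) := by ring
  have hm₁ : (1 : ℤ) ≤ (a : ℤ) - b := by omega
  have hm₂ : (a : ℤ) - b ≤ n - 1 := by omega
  have hD' : (1 : ℤ) ≤ D := by exact_mod_cast hD
  apply lt_dK_of_lt_sub_of_sub_lt (by positivity) <;> rw [hm] <;> nlinarith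

lemma SimpleGraph.Connected.subsingleton_of_diam_eq_zero {V : Type*} [Finite V]
    {G : SimpleGraph V} (hG : G.Connected) (h0 : G.diam = 0) : Subsingleton V :=
  haveI := hG.nonempty
  (G.diam_eq_zero.mp h0).resolve_left (G.connected_iff_ediam_ne_top.mp hG)

theorem stmt6_general {V : Type*} [Fintype V] (g : SimpleGraph V) (hconn : g.Connected)
    (n D : ℕ) (hD : g.diam = D)
    (K : ℤ) (hK : K = (2 * n - 1) * (D + 1) + 2)
    (id_ : V → ℕ) (hid : ∀ v, id_ v < n) (hinj : Function.Injective id_)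
    (r : V → ℤ) (hleg : ∀ u v : V, dK K (r u) (r v) ≤ (D : ℤ)) :
    ∀ u v : V, r u ≡ 2 * n + 2 * D * id_ u [ZMOD K] →
      r v ≡ 2 * n + 2 * D * id_ v [ZMOD K] → u = v := by
  intro u v hu hv
  rcases Nat.eq_zero_or_pos D with hD0 | hDpos
  · have := hconn.subsingleton_of_diam_eq_zero (hD.trans hD0)
    exact Subsingleton.elim u v
  · by_contra huv
    have hfar := lt_dK_privileged hDpos (hid u) (hid v) (hinj.ne huv)
    rw [← hK, ← dK_congr hu hv] at hfar
    exact (hleg u v).not_gt hfar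

/-- Mutual-exclusion safety of EMSS in legitimate unison configurations:
with `K = (2n-1)(D+1)+2` and distinct identities in `{0,...,n-1}`, if all
pairwise clock distances are at most the diameter `D`, then at most one
vertex is privileged, i.e. satisfies `r v ≡ 2n + 2·D·id_v (mod K)`. -/
theorem stmt6 {V : Type*} [Fintype V] (g : SimpleGraph V) (hconn : g.Connected)
    (n D : ℕ) (hn : 1 ≤ n) (hcard : Fintype.card V = n) (hD : g.diam = D)
    (K : ℤ) (hK : K = (2 * n - 1) * (D + 1) + 2)
    (id_ : V → ℕ) (hid : ∀ v, id_ v < n) (hinj : Function.Injective id_)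
    (r : V → ℤ) (hleg : ∀ u v : V, dK K (r u) (r v) ≤ (D : ℤ)) :
    ∀ u v : V, r u ≡ 2 * n + 2 * D * id_ u [ZMOD K] →
      r v ≡ 2 * n + 2 * D * id_ v [ZMOD K] → u = v :=
  stmt6_general g hconn n D hD K hK id_ hid hinj r hleg
end

section
/- Let ≤_{init} be the natural order on init_X = {-α,...,0}. If in a configuration every clock value lies in init_X and each vertex with a value in {-α,...,-1} that is locally minimal (w.r.t. ≤_{init}) among its neighbors increments synchronously, then some vertex holding the global minimum value strictly increases the global minimum or the global minimum is already 0; consequently, after at most α synchronous steps all clock values equal values in stab_X ∩ init_X = {0} or greater along the increment function. -/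
/-!
A vertex holding the global minimum `m < 0` sees only neighbours in `init_X` whose values are
`≥ m`, so the rule `CA` lets it increment; every other vertex already holds at least `m + 1`.
Hence the minimum rises by one per synchronous step until it reaches `0`, which takes at most
`α` steps since it starts at `≥ -α`, while no value ever leaves `init_X = [-α, 0]`.
-/

open scoped Classical

open Finset

universe u

variable {V : Type u}

noncomputable def caStep (g : SimpleGraph V) (α : ℤ) (r : V → ℤ) (v : V) : ℤ :=
  if (-α ≤ r v ∧ r v ≤ -1) ∧
      (∀ u ∈ g.neighborSet v, (-α ≤ r u ∧ r u ≤ 0) ∧ r v ≤ r u)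
  then r v + 1 else r v

section caStep

variable (g : SimpleGraph V) (α : ℤ) {r : V → ℤ}

theorem caStep_mem_Icc (hr : ∀ v, r v ∈ Set.Icc (-α) 0) (v : V) :
    caStep g α r v ∈ Set.Icc (-α) 0 := by
  unfold caStep
  split_ifs with h
  · exact ⟨by linarith [h.1.1], by linarith [h.1.2]⟩
  · exact hr v

variable [Fintype V] [Nonempty V]

theorem min_inf'_add_one_le_inf'_caStep (hr : ∀ v, r v ∈ Set.Icc (-α) 0) :
    min (univ.inf' univ_nonempty r + 1) 0 ≤ univ.inf' univ_nonempty (caStep g α r) := by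
  set m := univ.inf' univ_nonempty r
  have hm : ∀ v, m ≤ r v := fun v => inf'_le r (mem_univ v)
  refine le_inf' _ _ fun v _ => ?_
  unfold caStep
  split_ifs with hinc
  · linarith [min_le_left (m + 1) 0, hm v]
  · by_cases hneg : r v ≤ -1
    · suffices m < r v by omega
      by_contra! hmin
      exact hinc ⟨⟨(hr v).1, hneg⟩, fun u _ => ⟨hr u, hmin.trans (hm u)⟩⟩
    · omega

end caStep

section trajectory

variable {g : SimpleGraph V} {α : ℤ} {ρ : ℕ → V → ℤ}
  (hρ : ∀ k, ρ (k + 1) = caStep g α (ρ k)) (h₀ : ∀ v, ρ 0 v ∈ Set.Icc (-α) 0)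
include hρ h₀

theorem mem_Icc_of_caStep_trajectory (k : ℕ) (v : V) : ρ k v ∈ Set.Icc (-α) 0 := by
  induction k generalizing v with
  | zero => exact h₀ v
  | succ k ih => rw [hρ]; exact caStep_mem_Icc g α ih v

theorem min_neg_add_le_inf'_of_caStep_trajectory [Fintype V] [Nonempty V] (k : ℕ) :
    min (-α + k) 0 ≤ univ.inf' univ_nonempty (ρ k) := by
  induction k with
  | zero =>
    have : -α ≤ univ.inf' univ_nonempty (ρ 0) := le_inf' _ _ fun v _ => (h₀ v).1
    simp only [CharP.cast_eq_zero, add_zero]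
    exact (min_le_left _ _).trans this
  | succ k ih =>
    have step := min_inf'_add_one_le_inf'_caStep g α (mem_Icc_of_caStep_trajectory hρ h₀ k)
    rw [← hρ] at step
    push_cast
    omega

end trajectory

theorem stmt9_general {V : Type*} [Fintype V] [Nonempty V]
    (g : SimpleGraph V)
    (α : ℤ)
    (ρ : ℕ → V → ℤ)
    (hinit : ∀ v, -α ≤ ρ 0 v ∧ ρ 0 v ≤ 0)
    (hstep : ∀ k v,
      ρ (k + 1) v =
        if (-α ≤ ρ k v ∧ ρ k v ≤ -1) ∧
            (∀ u ∈ g.neighborSet v, (-α ≤ ρ k u ∧ ρ k u ≤ 0) ∧ ρ k v ≤ ρ k u)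
        then ρ k v + 1 else ρ k v) :
    (∀ k : ℕ,
      Finset.univ.inf' Finset.univ_nonempty (ρ k) < 0 →
        Finset.univ.inf' Finset.univ_nonempty (ρ k) <
          Finset.univ.inf' Finset.univ_nonempty (ρ (k + 1))) ∧
    (∀ v, ρ α.toNat v = 0) := by
  -- the two `if`s differ only in their `Decidable` instances, which `congr` identifies
  have hρ : ∀ k, ρ (k + 1) = caStep g α (ρ k) := fun k => funext fun v => by
    rw [hstep, caStep]; congr
  have hmem := mem_Icc_of_caStep_trajectory hρ hinit
  refine ⟨fun k hneg => ?_, fun v => ?_⟩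
  · have step := min_inf'_add_one_le_inf'_caStep g α (hmem k)
    rw [← hρ] at step
    omega
  · have hα : 0 ≤ α := neg_nonpos.mp ((hinit v).1.trans (hinit v).2)
    have hmin := min_neg_add_le_inf'_of_caStep_trajectory hρ hinit α.toNat
    have hle : univ.inf' univ_nonempty (ρ α.toNat) ≤ ρ α.toNat v := inf'_le _ (mem_univ v)
    have := (hmem α.toNat v).2
    omega

/-- Synchronous execution of the convergence rule `CA` of the unison
protocol: starting from a configuration with all clock values in
`init_X = {-α,...,0}`, at each step every vertex with a value in
`{-α,...,-1}` that is `≤_init`-locally minimal among its neighbours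
increments.  Then, as long as the global minimum is negative it strictly
increases at each step, and after `α` steps all values equal `0`. -/
theorem stmt9 {V : Type*} [Fintype V] [Nonempty V]
    (g : SimpleGraph V) (hconn : g.Connected)
    (α : ℤ) (hα : 1 ≤ α) (K : ℤ) (hK : 2 ≤ K)
    (ρ : ℕ → V → ℤ)
    (hinit : ∀ v, -α ≤ ρ 0 v ∧ ρ 0 v ≤ 0)
    (hstep : ∀ k v,
      ρ (k + 1) v =
        if (-α ≤ ρ k v ∧ ρ k v ≤ -1) ∧
            (∀ u ∈ g.neighborSet v, (-α ≤ ρ k u ∧ ρ k u ≤ 0) ∧ ρ k v ≤ ρ k u)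
        then ρ k v + 1 else ρ k v) :
    (∀ k : ℕ,
      Finset.univ.inf' Finset.univ_nonempty (ρ k) < 0 →
        Finset.univ.inf' Finset.univ_nonempty (ρ k) <
          Finset.univ.inf' Finset.univ_nonempty (ρ (k + 1))) ∧
    (∀ v, ρ α.toNat v = 0) :=
  stmt9_general g α ρ hinit hstep
end

section
/- In a path graph on vertices 0,...,D (so diameter D), consider the synchronous unison dynamics where at each step every vertex whose clock value in Z/KZ is locally minimal (w.r.t. ≤_l) among itself and its neighbors increments by 1 mod K (K ≥ 2D+2). If initially vertex i has clock value c_i with d_K(c_i, c_{i+1}) ≤ 1 for all i, then this safety invariant d_K(c_i, c_{i+1}) ≤ 1 is preserved by every synchronous step. -/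
open scoped Classical

/-- The local order `c ≤_l c'` : `(c'-c) mod K ∈ {0,1}`. -/
def lle (K c c' : ℤ) : Prop := (c' - c) % K = 0 ∨ (c' - c) % K = 1

/-!
Safety of an edge `uv` says exactly that `c u ≤_l c v` or `c v ≤_l c u`, and whether it survives a
step depends only on the two endpoints, so the argument works on any graph and for any set of
locally minimal vertices that move. Say `c u ≤_l c v`. If the clocks agree mod `K`, each side moves
by at most one, so they end at offset `-1`, `0` or `1`. If `v` is one ahead, then `c v ≤_l c u`
fails (this needs `K ≥ 3`), so `v` is not locally minimal and stays put, while `u` either stays one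
behind or catches up.
-/

section Clocks

variable {K : ℤ}

lemma dK_comm_s10 (K a b : ℤ) : dK K a b = dK K b a := min_comm _ _

lemma lle_or_lle_of_dK_le_one {a b : ℤ} (hK : K ≠ 0) (h : dK K a b ≤ 1) :
    lle K a b ∨ lle K b a := by
  have h₁ := Int.emod_nonneg (a - b) hK
  have h₂ := Int.emod_nonneg (b - a) hK
  rcases min_le_iff.mp h with h | h
  · right; unfold lle; omega
  · left; unfold lle; omega

lemma dK_le_one_of_sub_modEq {a b s : ℤ} (hK : 2 ≤ K) (h : b - a ≡ s [ZMOD K])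
    (hs : s = -1 ∨ s = 0 ∨ s = 1) : dK K a b ≤ 1 := by
  have h' : a - b ≡ -s [ZMOD K] := by simpa using h.neg
  unfold dK Int.ModEq at *
  rcases hs with rfl | rfl | rfl
  · rw [h', neg_neg, Int.emod_eq_of_lt zero_le_one (by omega)]
    exact min_le_left _ _
  · rw [h, Int.zero_emod]
    exact min_le_of_right_le zero_le_one
  · rw [h, Int.emod_eq_of_lt zero_le_one (by omega)]
    exact min_le_right _ _

lemma not_lle_of_sub_emod_eq_one {a b : ℤ} (hK : 3 ≤ K) (h : (b - a) % K = 1) :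
    ¬ lle K b a := by
  have h' : a - b ≡ K - 1 [ZMOD K] := by
    have : b - a ≡ 1 [ZMOD K] := by
      rw [Int.ModEq, h, Int.emod_eq_of_lt zero_le_one (by omega)]
    simpa [sub_eq_add_neg] using this.neg.add_right K
  unfold lle Int.ModEq at *
  rw [h', Int.emod_eq_of_lt (by omega) (by omega)]
  omega

lemma exists_modEq_add_of_eq_or {x x' : ℤ} {P : Prop} (h : x' = x ∨ P ∧ x' = (x + 1) % K) :
    ∃ i, (i = 0 ∨ i = 1 ∧ P) ∧ x' ≡ x + i [ZMOD K] := by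
  rcases h with rfl | ⟨hP, rfl⟩
  · exact ⟨0, Or.inl rfl, by rw [add_zero]⟩
  · exact ⟨1, Or.inr ⟨rfl, hP⟩, Int.mod_modEq _ _⟩

lemma dK_le_one_of_lle_of_modEq_add {a b a' b' i j : ℤ} (hK : 3 ≤ K) (hab : lle K a b)
    (hi : i = 0 ∨ i = 1) (hj : j = 0 ∨ j = 1 ∧ lle K b a)
    (ha' : a' ≡ a + i [ZMOD K]) (hb' : b' ≡ b + j [ZMOD K]) : dK K a' b' ≤ 1 := by
  have hdiff : b' - a' ≡ (b - a) % K + j - i [ZMOD K] := by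
    have := ((Int.mod_modEq (b - a) K).symm.add_right j).sub_right i
    rw [show b - a + j - i = b + j - (a + i) by ring] at this
    exact (hb'.sub ha').trans this
  apply dK_le_one_of_sub_modEq (by omega) hdiff
  rcases hab with h | h
  · omega
  · have hj0 : j = 0 := hj.resolve_right fun hj => not_lle_of_sub_emod_eq_one hK h hj.2
    omega

theorem dK_step_le_one {V : Type*} (G : SimpleGraph V) (hK : 3 ≤ K) {c c' : V → ℤ}
    (hstep : ∀ v, c' v = c v ∨ (∀ u, G.Adj v u → lle K (c v) (c u)) ∧ c' v = (c v + 1) % K)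
    {u v : V} (huv : G.Adj u v) (hsafe : dK K (c u) (c v) ≤ 1) :
    dK K (c' u) (c' v) ≤ 1 := by
  wlog hle : lle K (c u) (c v) generalizing u v
  · rw [dK_comm_s10] at hsafe ⊢
    exact this huv.symm hsafe
      ((lle_or_lle_of_dK_le_one (by omega) hsafe).resolve_right hle)
  obtain ⟨i, hi, hu⟩ := exists_modEq_add_of_eq_or (hstep u)
  obtain ⟨j, hj, hv⟩ := exists_modEq_add_of_eq_or (hstep v)
  exact dK_le_one_of_lle_of_modEq_add hK hle (hi.imp_right And.left)
    (hj.imp_right fun h => ⟨h.1, h.2 u huv.symm⟩) hu hv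

end Clocks

/-- On the path graph `0 — 1 — ⋯ — D`, the synchronous unison step (every
`≤_l`-locally-minimal vertex increments its clock by `1` mod `K`,
`K ≥ 2D+2`) preserves the safety invariant `d_K(c_i, c_{i+1}) ≤ 1` on
edges. -/
theorem stmt10 (D : ℕ) (K : ℤ) (hK : (2 * D + 2 : ℤ) ≤ K)
    (c : Fin (D + 1) → ℤ)
    (hsafe : ∀ u v : Fin (D + 1), (SimpleGraph.pathGraph (D + 1)).Adj u v →
      dK K (c u) (c v) ≤ 1)
    (c' : Fin (D + 1) → ℤ)
    (hstep : ∀ v, c' v =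
      if ∀ u, (SimpleGraph.pathGraph (D + 1)).Adj v u → lle K (c v) (c u)
      then (c v + 1) % K else c v) :
    ∀ u v : Fin (D + 1), (SimpleGraph.pathGraph (D + 1)).Adj u v →
      dK K (c' u) (c' v) ≤ 1 := by
  intro u v huv
  have hD : 1 ≤ D := by
    have := SimpleGraph.pathGraph_adj.mp huv
    omega
  refine dK_step_le_one _ (by omega) (fun w => ?_) huv (hsafe u v huv)
  rw [hstep w]
  split_ifs with hmin
  · exact Or.inr ⟨hmin, rfl⟩
  · exact Or.inl rfl
end

section
/- In the synchronous unison dynamics on a finite connected graph with all adjacent clock values locally comparable (d_K ≤ 1, K > 2·diam(g)+1), every vertex increments its clock at least once within every window of n consecutive synchronous steps, where n is the number of vertices. -/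
open scoped Classical

/-!
Because `K > 2·diam + 1`, the initial clocks lift to integer heights `h : V → ℤ` that differ by
at most one along every edge: reduce `ρ₀ v - ρ₀ v₀` into the window `[-diam, K - diam)`, and
along a geodesic to `v₀` the lifted values can never leave `[-diam, diam]`, so no wrap-around
occurs. For such heights, `≤_l` between neighbours is exactly `≤` between their lifts, so the
clocks follow the integer dynamics "increment every vertex that is minimal in its closed
neighbourhood", which keeps the heights 1-Lipschitz and raises the global minimum by at least one
per step. A vertex at distance `k < n` from a global minimum has height at most `min + k`; if it
stayed put for `k` steps it would then be a global minimum itself, hence increment.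
-/

open Function

theorem Int.ModEq.eq_of_abs_sub_lt {K a b : ℤ} (h : a ≡ b [ZMOD K]) (hab : |a - b| < K) :
    a = b :=
  sub_eq_zero.mp <| Int.eq_zero_of_abs_lt_dvd (Int.modEq_iff_dvd.mp h.symm) hab

theorem Int.emod_add_sub_modEq (K x d : ℤ) : (x + d) % K - d ≡ x [ZMOD K] := by
  simpa using (Int.mod_modEq (x + d) K).sub_right d

theorem Int.emod_add_sub_modEq_add {K x y z d ε : ℤ} (h : x ≡ y + ε [ZMOD K]) :
    (x - z + d) % K - d ≡ (y - z + d) % K - d + ε [ZMOD K] :=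
  calc (x - z + d) % K - d ≡ x - z [ZMOD K] := Int.emod_add_sub_modEq _ _ _
    _ ≡ y + ε - z [ZMOD K] := h.sub_right z
    _ = (y - z) + ε := by ring
    _ ≡ _ [ZMOD K] := (Int.emod_add_sub_modEq _ _ _).symm.add_right ε

theorem exists_modEq_add_of_dK_le_one {K a b : ℤ} (hK : 0 < K) (h : dK K a b ≤ 1) :
    ∃ ε, |ε| ≤ 1 ∧ a ≡ b + ε [ZMOD K] := by
  have h₁ := Int.emod_nonneg (a - b) hK.ne'
  have h₂ := Int.emod_nonneg (b - a) hK.ne'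
  rcases min_le_iff.mp h with h | h
  · refine ⟨(a - b) % K, by rw [abs_le]; omega, ?_⟩
    calc a = b + (a - b) := by ring
      _ ≡ b + (a - b) % K [ZMOD K] := (Int.mod_modEq _ _).symm.add_left b
  · refine ⟨-((b - a) % K), by rw [abs_le]; omega, ?_⟩
    calc a = b + -(b - a) := by ring
      _ ≡ b + -((b - a) % K) [ZMOD K] := (Int.mod_modEq _ _).symm.neg.add_left b

theorem lle_iff_le_of_modEq {K a b x y : ℤ} (hK : 3 ≤ K) (ha : a ≡ x [ZMOD K])
    (hb : b ≡ y [ZMOD K]) (hxy : |x - y| ≤ 1) : lle K a b ↔ x ≤ y := by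
  have hba : (b - a) % K = (y - x) % K := hb.sub ha
  rw [lle, hba]
  rw [abs_le] at hxy
  obtain hyx | hyx | hyx : y - x = -1 ∨ y - x = 0 ∨ y - x = 1 := by omega
  · have : (-1 : ℤ) % K = K - 1 := by
      rw [show (-1 : ℤ) = K - 1 + K * (-1) by ring, Int.add_mul_emod_self_left,
        Int.emod_eq_of_lt (by omega) (by omega)]
    rw [hyx, this]; omega
  · rw [hyx, Int.zero_emod]; omega
  · rw [hyx, Int.emod_eq_of_lt (by omega) (by omega)]; omega

namespace SimpleGraph

variable {V : Type*} (g : SimpleGraph V)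

def IsNbhdMin (h : V → ℤ) (v : V) : Prop := ∀ u, g.Adj v u → h v ≤ h u

noncomputable def unisonStep (h : V → ℤ) : V → ℤ :=
  fun v => if g.IsNbhdMin h v then h v + 1 else h v

def IsOneLipschitz (h : V → ℤ) : Prop := ∀ u v, g.Adj u v → |h u - h v| ≤ 1

variable {g}

theorem IsOneLipschitz.unisonStep {h : V → ℤ} (hh : g.IsOneLipschitz h) :
    g.IsOneLipschitz (g.unisonStep h) := by
  intro u v huv
  have huv' := abs_le.mp (hh u v huv)
  unfold SimpleGraph.unisonStep
  split_ifs with hu hv hv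
  · simpa using hh u v huv
  · have := hu v huv; rw [abs_le]; omega
  · have := hv u huv.symm; rw [abs_le]; omega
  · exact hh u v huv

theorem IsOneLipschitz.iterate {h : V → ℤ} (hh : g.IsOneLipschitz h) (k : ℕ) :
    g.IsOneLipschitz (g.unisonStep^[k] h) := by
  induction k with
  | zero => exact hh
  | succ k ih => rw [iterate_succ_apply']; exact ih.unisonStep

theorem IsOneLipschitz.abs_sub_le_length {h : V → ℤ} (hh : g.IsOneLipschitz h) {u v : V}
    (p : g.Walk u v) : |h u - h v| ≤ p.length := by
  induction p with
  | nil => simp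
  | cons hab _ ih =>
    have := abs_le.mp (hh _ _ hab)
    rw [Walk.length_cons, Nat.cast_succ, abs_le] at *
    omega

theorem add_one_le_unisonStep {h : V → ℤ} {m : ℤ} (hm : ∀ u, m ≤ h u) (v : V) :
    m + 1 ≤ g.unisonStep h v := by
  unfold SimpleGraph.unisonStep
  split_ifs with hv
  · linarith [hm v]
  · obtain ⟨u, huv, hlt⟩ : ∃ u, g.Adj v u ∧ h u < h v := by
      simpa [IsNbhdMin] using hv
    linarith [hm u]

theorem exists_isNbhdMin_iterate_of_le {h : V → ℤ} {m : ℤ} (hm : ∀ u, m ≤ h u) {v : V}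
    {k : ℕ} (hv : h v ≤ m + k) : ∃ j ≤ k, g.IsNbhdMin (g.unisonStep^[j] h) v := by
  induction k generalizing h m with
  | zero => exact ⟨0, le_rfl, fun u _ => by
    rw [iterate_zero_apply]; push_cast at hv; linarith [hm u]⟩
  | succ k ih =>
    by_cases hmin : g.IsNbhdMin h v
    · exact ⟨0, k.succ.zero_le, hmin⟩
    · have hfix : g.unisonStep h v = h v := if_neg hmin
      obtain ⟨j, hj, hmin'⟩ :=
        ih (add_one_le_unisonStep (g := g) hm) (by push_cast at hv ⊢; omega)
      exact ⟨j + 1, by omega, by rwa [iterate_succ_apply]⟩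

theorem Connected.exists_isNbhdMin_iterate [Fintype V] (hconn : g.Connected) {h : V → ℤ}
    (hh : g.IsOneLipschitz h) (v : V) :
    ∃ j < Fintype.card V, g.IsNbhdMin (g.unisonStep^[j] h) v := by
  obtain ⟨w, -, hw⟩ := Finset.exists_min_image Finset.univ h ⟨v, Finset.mem_univ v⟩
  obtain ⟨p, hp, -⟩ := hconn.exists_path_of_dist w v
  have hwv := abs_le.mp (hh.abs_sub_le_length p)
  obtain ⟨j, hj, hmin⟩ := exists_isNbhdMin_iterate_of_le (g := g) (v := v) (k := p.length)
    (fun u => hw u (Finset.mem_univ u)) (by omega)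
  exact ⟨j, hj.trans_lt hp.length_lt, hmin⟩

/-- `(x + d) % K - d` is the representative of `x` modulo `K` in `[-d, K - d)`. -/
theorem abs_emod_add_sub_le_length {K d : ℤ} (hdK : 2 * d + 1 < K) {f : V → ℤ}
    (hf : ∀ u v, g.Adj u v → ∃ ε, |ε| ≤ 1 ∧ f u ≡ f v + ε [ZMOD K])
    {v w : V} (p : g.Walk v w) (hp : p.length ≤ d) :
    |(f v - f w + d) % K - d| ≤ p.length := by
  induction p with
  | nil =>
    rw [sub_self, zero_add, Int.emod_eq_of_lt (by omega) (by omega)]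
    simp
  | @cons a b c hab q ih =>
    rw [Walk.length_cons, Nat.cast_succ] at hp ⊢
    have hb := abs_le.mp (ih (by omega))
    obtain ⟨ε, hε, hfab⟩ := hf a b hab
    have hε := abs_le.mp hε
    have hK : 0 < K := by omega
    have h₀ := Int.emod_nonneg (f a - f c + d) hK.ne'
    have h₁ := Int.emod_lt_of_pos (f a - f c + d) hK
    rw [(Int.emod_add_sub_modEq_add hfab).eq_of_abs_sub_lt (by rw [abs_lt]; omega), abs_le]
    omega

theorem Connected.exists_isOneLipschitz_modEq [Finite V] (hconn : g.Connected) {K : ℤ}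
    (hK : 2 * g.diam + 1 < K) {f : V → ℤ}
    (hf : ∀ u v, g.Adj u v → ∃ ε, |ε| ≤ 1 ∧ f u ≡ f v + ε [ZMOD K]) :
    ∃ h : V → ℤ, g.IsOneLipschitz h ∧ ∀ v, f v ≡ h v [ZMOD K] := by
  have := hconn.nonempty
  obtain ⟨v₀⟩ := hconn.nonempty
  set d : ℤ := (g.diam : ℤ)
  have hσ : ∀ v, |(f v - f v₀ + d) % K - d| ≤ d := fun v => by
    obtain ⟨p, hp⟩ := hconn.exists_walk_length_eq_dist v v₀
    have hpd : (p.length : ℤ) ≤ d := by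
      rw [hp]; exact Nat.cast_le.mpr (dist_le_diam (connected_iff_ediam_ne_top.mp hconn))
    exact (abs_emod_add_sub_le_length hK hf p hpd).trans hpd
  refine ⟨fun v => f v₀ + ((f v - f v₀ + d) % K - d), fun u v huv => ?_, fun v => ?_⟩
  · obtain ⟨ε, hε, hfuv⟩ := hf u v huv
    have hu := abs_le.mp (hσ u)
    have hv := abs_le.mp (hσ v)
    have := abs_le.mp hε
    beta_reduce
    rw [(Int.emod_add_sub_modEq_add (z := f v₀) (d := d) hfuv).eq_of_abs_sub_lt
      (by rw [abs_lt]; omega)]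
    simpa using hε
  · calc f v = f v₀ + (f v - f v₀) := by ring
      _ ≡ _ [ZMOD K] := (Int.emod_add_sub_modEq _ _ _).symm.add_left _

theorem IsOneLipschitz.forall_lle_iff_isNbhdMin {h : V → ℤ} (hh : g.IsOneLipschitz h) {K : ℤ}
    (hK : 3 ≤ K) {r : V → ℤ} (hr : ∀ v, r v ≡ h v [ZMOD K]) (v : V) :
    (∀ u, g.Adj v u → lle K (r v) (r u)) ↔ g.IsNbhdMin h v :=
  forall₂_congr fun u hvu => lle_iff_le_of_modEq hK (hr v) (hr u) (hh v u hvu)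

theorem IsOneLipschitz.modEq_iterate_unisonStep [Fintype V] {h : V → ℤ}
    (hh : g.IsOneLipschitz h) {K : ℤ} (hK : 3 ≤ K) {ρ : ℕ → V → ℤ}
    (hstep : ∀ k v, ρ (k + 1) v =
      if ∀ u, g.Adj v u → lle K (ρ k v) (ρ k u) then (ρ k v + 1) % K else ρ k v)
    (h0 : ∀ v, ρ 0 v ≡ h v [ZMOD K]) (k : ℕ) (v : V) :
    ρ k v ≡ g.unisonStep^[k] h v [ZMOD K] := by
  induction k generalizing v with
  | zero => exact h0 v
  | succ k ih =>
    rw [hstep, iterate_succ_apply', SimpleGraph.unisonStep,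
      ← (hh.iterate k).forall_lle_iff_isNbhdMin hK ih]
    split_ifs
    · exact (Int.mod_modEq _ _).trans ((ih v).add_right 1)
    · exact ih v

end SimpleGraph

theorem stmt12_general {V : Type*} [Fintype V]
    (g : SimpleGraph V) (hconn : g.Connected)
    (K : ℤ) (hK : (2 * g.diam + 1 : ℤ) < K)
    (ρ : ℕ → V → ℤ)
    (hsafe : ∀ u v : V, g.Adj u v → dK K (ρ 0 u) (ρ 0 v) ≤ 1)
    (hstep : ∀ k v, ρ (k + 1) v =
      if ∀ u, g.Adj v u → lle K (ρ k v) (ρ k u)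
      then (ρ k v + 1) % K else ρ k v) :
    ∀ (v : V) (t : ℕ), ∃ s, t ≤ s ∧ s < t + Fintype.card V ∧
      (∀ u, g.Adj v u → lle K (ρ s v) (ρ s u)) := by
  intro v t
  by_cases hK3 : 3 ≤ K
  · obtain ⟨h, hh, hρh⟩ := hconn.exists_isOneLipschitz_modEq hK
      fun u w huw => exists_modEq_add_of_dK_le_one (by omega) (hsafe u w huw)
    obtain ⟨j, hj, hmin⟩ := hconn.exists_isNbhdMin_iterate (hh.iterate t) v
    refine ⟨t + j, by omega, by omega, ?_⟩
    rw [(hh.iterate (t + j)).forall_lle_iff_isNbhdMin hK3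
      (hh.modEq_iterate_unisonStep hK3 hstep hρh (t + j)), add_comm, iterate_add_apply]
    exact hmin
  · refine ⟨t, le_rfl, by simp [Fintype.card_pos_iff.mpr ⟨v⟩], fun u hvu => absurd ?_ hK3⟩
    -- `K ≤ 2` forces `diam = 0`, so `v` has no neighbours.
    have : Nontrivial V := ⟨v, u, hvu.ne⟩
    have := SimpleGraph.connected_iff_diam_ne_zero.mp hconn
    omega

/-- Liveness of synchronous unison: with `K > 2·diam(g)+1` and all adjacent
clock values locally comparable, under the synchronous dynamics (each step
increments exactly the `≤_l`-locally-minimal vertices) every vertex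
increments at least once in every window of `n = #V` consecutive steps. -/
theorem stmt12 {V : Type*} [Fintype V] [Nonempty V]
    (g : SimpleGraph V) (hconn : g.Connected)
    (K : ℤ) (hK : (2 * g.diam + 1 : ℤ) < K)
    (ρ : ℕ → V → ℤ)
    (hsafe : ∀ u v : V, g.Adj u v → dK K (ρ 0 u) (ρ 0 v) ≤ 1)
    (hstep : ∀ k v, ρ (k + 1) v =
      if ∀ u, g.Adj v u → lle K (ρ k v) (ρ k u)
      then (ρ k v + 1) % K else ρ k v) :
    ∀ (v : V) (t : ℕ), ∃ s, t ≤ s ∧ s < t + Fintype.card V ∧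
      (∀ u, g.Adj v u → lle K (ρ s v) (ρ s u)) :=
  stmt12_general g hconn K hK ρ hsafe hstep
end
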